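/- arXiv:1504.01242 — 3 statements merged into one kernel-verified Lean document; each statement's English description precedes it below -/
import Mathlib

section
/- Let C: f = 0 be a reduced plane curve of degree d ≥ 4 which is a free divisor. Then st(f) = 2d − 4 − mdr(f) = T − ct(f), where T = 3(d−2). -/
open MvPolynomial

noncomputable section

/-- The polynomial ring `S = ℂ[x,y,z]`. -/
abbrev S3 : Type := MvPolynomial (Fin 3) ℂ

/-- The Jacobian ideal of `f`, generated by the three partial derivatives. -/
def jacobianIdeal (f : S3) : Ideal S3 :=
  Ideal.span {pderiv 0 f, pderiv 1 f, pderiv 2 f}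

/-- The dimension `m(f)_k` of the degree `k` homogeneous component of the
Milnor algebra `M(f) = S/J_f`. -/
def milnorDim (f : S3) (k : ℕ) : ℕ :=
  Module.finrank ℂ (Submodule.map (Ideal.Quotient.mkₐ ℂ (jacobianIdeal f)).toLinearMap
    (homogeneousSubmodule (Fin 3) ℂ k))

/-- The `S`-linear map `(a,b,c) ↦ a f_x + b f_y + c f_z`. -/
def relMap (f : S3) : (Fin 3 → S3) →ₗ[S3] S3 where
  toFun ρ := ∑ i, ρ i * pderiv i f
  map_add' a b := by simp [add_mul, Finset.sum_add_distrib]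
  map_smul' c a := by simp [Finset.mul_sum, mul_assoc]

/-- The module `AR(f)` of all relations among the partial derivatives of `f`. -/
def AR (f : S3) : Submodule S3 (Fin 3 → S3) := LinearMap.ker (relMap f)

/-- The degree `m` graded piece `AR(f)_m`, as a `ℂ`-subspace of `S³`. -/
def ARgr (f : S3) (m : ℕ) : Submodule ℂ (Fin 3 → S3) :=
  (LinearMap.ker ((relMap f).restrictScalars ℂ)) ⊓
    Submodule.pi Set.univ (fun _ => homogeneousSubmodule (Fin 3) ℂ m)

/-- `ar(f)_m = dim_ℂ AR(f)_m`. -/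
def arDim (f : S3) (m : ℕ) : ℕ := Module.finrank ℂ (ARgr f m)

/-- A vector of polynomials is homogeneous of degree `m` if all components are. -/
def IsHomogVec (ρ : Fin 3 → S3) (m : ℕ) : Prop := ∀ i, (ρ i).IsHomogeneous m

/-- `C : f = 0` is a free divisor with exponents `d₁, d₂` if `AR(f)` is a free
`S`-module with a homogeneous basis in degrees `d₁` and `d₂`. -/
def IsFreeDivisorWith (f : S3) (d₁ d₂ : ℕ) : Prop :=
  ∃ b : Module.Basis (Fin 2) S3 (AR f),
    IsHomogVec (↑(b 0)) d₁ ∧ IsHomogVec (↑(b 1)) d₂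

/-- `C : f = 0` is a free divisor if `AR(f)` is a free graded `S`-module of rank two. -/
def IsFreeDivisor (f : S3) : Prop := ∃ d₁ d₂ : ℕ, IsFreeDivisorWith f d₁ d₂

/-- `binom(a, 2)` for an integer `a`, zero when `a < 2`. -/
def chooseTwo (a : ℤ) : ℤ := (a.toNat).choose 2

/-- The Hilbert function `m(f_s)_k` of the Milnor algebra of a smooth plane curve
of degree `d`. -/
def smoothMilnorDim (d : ℕ) (k : ℤ) : ℤ :=
  chooseTwo (k + 2) - 3 * chooseTwo (k - d + 3) + 3 * chooseTwo (k - 2 * d + 4)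
    - chooseTwo (k - 3 * d + 5)

/-- `m(f)_k` extended to integer indices by zero. -/
def milnorDimZ (f : S3) (k : ℤ) : ℤ := if k < 0 then 0 else milnorDim f k.toNat

/-- `ar(f)_m` extended to integer indices by zero. -/
def arDimZ (f : S3) (m : ℤ) : ℤ := if m < 0 then 0 else arDim f m.toNat

/-- The coincidence threshold `ct(f)`. -/
def ctf (f : S3) (d : ℕ) : ℕ :=
  sSup {q : ℕ | ∀ k ≤ q, (milnorDim f k : ℤ) = smoothMilnorDim d k}

/-- The stability threshold `st(f)`. -/
def stf (f : S3) (τ : ℕ) : ℕ := sInf {q : ℕ | ∀ k ≥ q, milnorDim f k = τ}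

/-- `mdr(f)`, the minimal degree of a syzygy. -/
def mdr (f : S3) : ℕ := sInf {q : ℕ | ARgr f q ≠ ⊥}

/-- The irrelevant maximal ideal `(x,y,z)`. -/
def maxIdeal3 : Ideal S3 := Ideal.span {X 0, X 1, X 2}

/-- The saturation `I_f` of the Jacobian ideal with respect to `(x,y,z)`. -/
def satJacobian (f : S3) : Ideal S3 := ⨆ n : ℕ, (jacobianIdeal f).colon ((maxIdeal3 ^ n : Ideal S3) : Set S3)


/-!
If `C` is free with exponents `d₁ ≤ d₂`, then `AR(f) ≅ S(-d₁) ⊕ S(-d₂)`, and the exact sequence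
`0 → AR(f)_{k-d+1} → S_{k-d+1}³ → S_k → M(f)_k → 0` gives
`m(f)_k = C(k+2,2) - 3 C(k-d+3,2) + C(k-d+3-d₁,2) + C(k-d+3-d₂,2)`.
The first difference of this is eventually `d - 1 - d₁ - d₂`, so stabilisation forces
`d₁ + d₂ = d - 1`. The formula is then constant exactly from `k = d + d₂ - 3` on and agrees with
the smooth one exactly up to `k = d + d₁ - 2`, while `mdr(f) = d₁`.
-/

namespace MvPolynomial

variable {σ R : Type*} [CommSemiring R]

instance [Finite σ] (n : ℕ) : Module.Finite R (homogeneousSubmodule σ R n) :=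
  Module.Finite.iff_fg.mpr (homogeneousSubmodule_fg σ R n)

attribute [local instance] gradedAlgebra in
theorem homogeneousComponent_mul_of_isHomogeneous {p : MvPolynomial σ R} {e : ℕ}
    (hp : p.IsHomogeneous e) (q : MvPolynomial σ R) (k : ℕ) :
    homogeneousComponent k (q * p) =
      if e ≤ k then homogeneousComponent (k - e) q * p else 0 := by
  classical
  simp only [← decomposition.decompose'_apply]
  exact DirectSum.coe_decompose_mul_of_right_mem (homogeneousSubmodule σ R) k hp

theorem finrank_homogeneousSubmodule (σ K : Type*) [Fintype σ] [Field K] (n : ℕ) :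
    Module.finrank K (homogeneousSubmodule σ K n) = (Fintype.card σ + n - 1).choose n := by
  classical
  have hset : {d : σ →₀ ℕ | d.degree = n} = ↑(Finset.univ.finsuppAntidiag n : Finset (σ →₀ ℕ)) := by
    ext d; simp [Finsupp.degree_eq_sum]
  rw [homogeneousSubmodule_eq_finsupp_supported, hset]
  refine (Module.finrank_eq_nat_card_basis (basisRestrictSupport K _)).trans ?_
  rw [Nat.card_coe_set_eq, Set.ncard_coe_finset, Finset.card_finsuppAntidiag_nat_eq_choose,
    Finset.card_univ]

end MvPolynomial

theorem Submodule.finrank_map_add_finrank_ker_inf {K V W : Type*} [DivisionRing K]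
    [AddCommGroup V] [Module K V] [AddCommGroup W] [Module K W] (φ : V →ₗ[K] W)
    (P : Submodule K V) [FiniteDimensional K P] :
    Module.finrank K (P.map φ) + Module.finrank K ↥(LinearMap.ker φ ⊓ P) =
      Module.finrank K P := by
  have hker : (LinearMap.ker φ).comap P.subtype = (LinearMap.ker φ ⊓ P).comap P.subtype := by
    simp [Submodule.comap_inf]
  rw [← LinearMap.range_domRestrict, ← LinearMap.finrank_range_add_finrank_ker (φ.domRestrict P),
    LinearMap.ker_domRestrict, hker, (Submodule.comapSubtypeEquivOfLe inf_le_right).finrank_eq]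

def Submodule.piUnivEquiv {R ι M : Type*} [Semiring R] [AddCommMonoid M] [Module R M]
    (p : ι → Submodule R M) : Submodule.pi Set.univ p ≃ₗ[R] ∀ i, p i where
  toFun x i := ⟨x.1 i, x.2 i (Set.mem_univ i)⟩
  invFun y := ⟨fun i => y i, fun i _ => (y i).2⟩
  map_add' _ _ := rfl
  map_smul' _ _ := rfl

instance {K ι V : Type*} [Finite ι] [DivisionRing K] [AddCommGroup V] [Module K V]
    (p : ι → Submodule K V) [∀ i, FiniteDimensional K (p i)] :
    FiniteDimensional K (Submodule.pi Set.univ p) :=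
  (Submodule.piUnivEquiv p).symm.finiteDimensional

theorem Submodule.finrank_pi_univ {K ι V : Type*} [Fintype ι] [DivisionRing K]
    [AddCommGroup V] [Module K V] (p : ι → Submodule K V) [∀ i, FiniteDimensional K (p i)] :
    Module.finrank K (Submodule.pi Set.univ p) = ∑ i, Module.finrank K (p i) := by
  rw [(Submodule.piUnivEquiv p).finrank_eq, Module.finrank_pi_fintype]

theorem Nat.sInf_setOf_forall_ge_eq {P : ℕ → Prop} {n : ℕ} (hP : ∀ k ≥ n + 1, P k) (hn : ¬ P n) :
    sInf {q | ∀ k ≥ q, P k} = n + 1 :=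
  le_antisymm (Nat.sInf_le hP) <| le_csInf ⟨_, hP⟩ fun _ hq =>
    Nat.succ_le_of_lt <| not_le.mp fun hqn => hn (hq n hqn)

theorem Nat.sSup_setOf_forall_le_eq {P : ℕ → Prop} {n : ℕ} (hP : ∀ k ≤ n, P k)
    (hn : ¬ P (n + 1)) : sSup {q | ∀ k ≤ q, P k} = n := by
  have hbdd : ∀ q ∈ {q | ∀ k ≤ q, P k}, q ≤ n := fun q hq =>
    not_lt.mp fun hnq => hn (hq (n + 1) hnq)
  exact le_antisymm (csSup_le ⟨n, hP⟩ hbdd) (le_csSup ⟨n, hbdd⟩ hP)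

theorem chooseTwo_natCast (n : ℕ) : chooseTwo n = n.choose 2 := by
  rw [chooseTwo, Int.toNat_natCast]

theorem chooseTwo_eq_zero_of_le_one {a : ℤ} (h : a ≤ 1) : chooseTwo a = 0 := by
  rw [chooseTwo, Nat.choose_eq_zero_of_lt (by omega), Nat.cast_zero]

theorem chooseTwo_add_one (a : ℤ) : chooseTwo (a + 1) = chooseTwo a + max a 0 := by
  rcases le_or_gt a 0 with h | h
  · rw [chooseTwo_eq_zero_of_le_one (by omega), chooseTwo_eq_zero_of_le_one (by omega),
      max_eq_right h, add_zero]
  · obtain ⟨n, rfl⟩ := Int.eq_ofNat_of_zero_le h.le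
    rw [show (n : ℤ) + 1 = ((n + 1 : ℕ) : ℤ) by push_cast; ring, chooseTwo_natCast,
      chooseTwo_natCast, max_eq_left h.le, Nat.choose_succ_succ, Nat.choose_one_right]
    push_cast; ring

theorem chooseTwo_nonneg (a : ℤ) : 0 ≤ chooseTwo a := Int.natCast_nonneg _

local notation "S[" k "]" => homogeneousSubmodule (Fin 3) ℂ k

theorem finrank_homogeneousSubmodule_fin_three (k : ℕ) :
    (Module.finrank ℂ S[k] : ℤ) = chooseTwo (k + 2) := by
  rw [show (k : ℤ) + 2 = (k + 2 : ℕ) by push_cast; ring, chooseTwo_natCast,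
    finrank_homogeneousSubmodule, Fintype.card_fin, show 3 + k - 1 = k + 2 by omega,
    Nat.choose_symm_add]

theorem milnorDim_add_finrank_jacobianIdeal_inf (f : S3) (k : ℕ) :
    milnorDim f k + Module.finrank ℂ ↥((jacobianIdeal f).restrictScalars ℂ ⊓ S[k]) =
      Module.finrank ℂ S[k] := by
  have hker : LinearMap.ker (Ideal.Quotient.mkₐ ℂ (jacobianIdeal f)).toLinearMap =
      (jacobianIdeal f).restrictScalars ℂ := by
    ext g; simp [Ideal.Quotient.eq_zero_iff_mem]
  rw [← hker]
  exact Submodule.finrank_map_add_finrank_ker_inf _ _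

theorem jacobianIdeal_eq_range_relMap (f : S3) : jacobianIdeal f = LinearMap.range (relMap f) := by
  ext g
  have hgen : ({pderiv 0 f, pderiv 1 f, pderiv 2 f} : Set S3) = Set.range (pderiv · f) := by
    ext; simp [Fin.exists_fin_succ, eq_comm]
  rw [jacobianIdeal, hgen, Ideal.mem_span_range_iff_exists_fun]
  rfl

theorem relMap_mem_homogeneousSubmodule {f : S3} {d m : ℕ} (hf : f.IsHomogeneous d)
    {ρ : Fin 3 → S3} (hρ : ∀ i, ρ i ∈ S[m]) : relMap f ρ ∈ S[m + (d - 1)] :=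
  IsHomogeneous.sum _ _ _ fun i _ => (hρ i).mul (hf.pderiv (i := i))

theorem homogeneousComponent_relMap {f : S3} {d : ℕ} (hf : f.IsHomogeneous d)
    (ρ : Fin 3 → S3) (k : ℕ) :
    homogeneousComponent k (relMap f ρ) =
      if d - 1 ≤ k then relMap f (fun i => homogeneousComponent (k - (d - 1)) (ρ i)) else 0 := by
  simp only [relMap, LinearMap.coe_mk, AddHom.coe_mk, map_sum,
    homogeneousComponent_mul_of_isHomogeneous (hf.pderiv (i := _))]
  split_ifs <;> simp

theorem map_relMap_pi_homogeneousSubmodule {f : S3} {d : ℕ} (hf : f.IsHomogeneous d) (m : ℕ) :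
    (Submodule.pi Set.univ fun _ => S[m]).map ((relMap f).restrictScalars ℂ) =
      (jacobianIdeal f).restrictScalars ℂ ⊓ S[m + (d - 1)] := by
  ext g
  constructor
  · rintro ⟨ρ, hρ, rfl⟩
    exact ⟨(jacobianIdeal_eq_range_relMap f).ge ⟨ρ, rfl⟩,
      relMap_mem_homogeneousSubmodule hf fun i => hρ i (Set.mem_univ i)⟩
  · rintro ⟨hJ, hg⟩
    obtain ⟨ρ, rfl⟩ : g ∈ LinearMap.range (relMap f) := jacobianIdeal_eq_range_relMap f ▸ hJ
    refine ⟨fun i => homogeneousComponent m (ρ i),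
      fun i _ => homogeneousComponent_mem _ _, ?_⟩
    have := homogeneousComponent_relMap hf ρ (m + (d - 1))
    rw [homogeneousComponent_eq_self hg, if_pos (Nat.le_add_left _ _), Nat.add_sub_cancel] at this
    exact this.symm

theorem finrank_jacobianIdeal_inf_add_arDim {f : S3} {d : ℕ} (hf : f.IsHomogeneous d) (m : ℕ) :
    Module.finrank ℂ ↥((jacobianIdeal f).restrictScalars ℂ ⊓ S[m + (d - 1)]) + arDim f m =
      3 * Module.finrank ℂ S[m] := by
  rw [← map_relMap_pi_homogeneousSubmodule hf, arDim, ARgr,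
    Submodule.finrank_map_add_finrank_ker_inf, Submodule.finrank_pi_univ]
  simp only [Finset.sum_const, Finset.card_univ, Fintype.card_fin, smul_eq_mul]

/-- `S(-e)_m`, the degree `m` piece of the twist `S(-e)`. -/
def twistedPiece (e m : ℕ) : Submodule ℂ S3 := if e ≤ m then S[m - e] else ⊥

instance (e m : ℕ) : FiniteDimensional ℂ (twistedPiece e m) := by
  by_cases h : e ≤ m
  · rw [twistedPiece, if_pos h]; infer_instance
  · rw [twistedPiece, if_neg h]; infer_instance

theorem finrank_twistedPiece (e m : ℕ) :
    (Module.finrank ℂ (twistedPiece e m) : ℤ) = chooseTwo ((m : ℤ) - e + 2) := by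
  by_cases h : e ≤ m
  · rw [twistedPiece, if_pos h, finrank_homogeneousSubmodule_fin_three, Nat.cast_sub h]
  · rw [twistedPiece, if_neg h, finrank_bot, chooseTwo_eq_zero_of_le_one (by omega)]; rfl

theorem exists_mem_twistedPiece_homogeneousComponent_mul (e m : ℕ) (q : S3) :
    ∃ u ∈ twistedPiece e m, ∀ p : S3, p.IsHomogeneous e →
      homogeneousComponent m (q * p) = u * p := by
  by_cases h : e ≤ m
  · refine ⟨_, by rw [twistedPiece, if_pos h]; exact homogeneousComponent_mem _ q, fun p hp => ?_⟩
    rw [homogeneousComponent_mul_of_isHomogeneous hp, if_pos h]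
  · refine ⟨0, Submodule.zero_mem _, fun p hp => ?_⟩
    rw [homogeneousComponent_mul_of_isHomogeneous hp, if_neg h, zero_mul]

theorem mul_mem_of_mem_twistedPiece {e m : ℕ} {u p : S3} (hu : u ∈ twistedPiece e m)
    (hp : p.IsHomogeneous e) : u * p ∈ S[m] := by
  unfold twistedPiece at hu
  split_ifs at hu with h
  · simpa [Nat.sub_add_cancel h] using (hu.mul hp : (u * p).IsHomogeneous (m - e + e))
  · rw [(Submodule.mem_bot ℂ).mp hu, zero_mul]; exact Submodule.zero_mem _

section FreeBasis

variable {f : S3} (b : Module.Basis (Fin 2) S3 (AR f))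

def syzygyCombination (d₁ d₂ m : ℕ) :
    (twistedPiece d₁ m × twistedPiece d₂ m) →ₗ[ℂ] (Fin 3 → S3) where
  toFun p := (p.1 : S3) • (b 0 : Fin 3 → S3) + (p.2 : S3) • (b 1 : Fin 3 → S3)
  map_add' x y := by simp only [Prod.fst_add, Prod.snd_add, Submodule.coe_add, add_smul]; abel
  map_smul' c x := by simp [smul_add, smul_assoc]

theorem syzygyCombination_apply (d₁ d₂ m : ℕ) (p : twistedPiece d₁ m × twistedPiece d₂ m) :
    syzygyCombination b d₁ d₂ m p =
      (p.1 : S3) • (b 0 : Fin 3 → S3) + (p.2 : S3) • (b 1 : Fin 3 → S3) :=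
  rfl

theorem syzygyCombination_injective (d₁ d₂ m : ℕ) :
    Function.Injective (syzygyCombination b d₁ d₂ m) := by
  rw [← LinearMap.ker_eq_bot, eq_bot_iff]
  rintro ⟨u, v⟩ huv
  have hli := Fintype.linearIndependent_iff.mp
    (b.linearIndependent.map' (AR f).subtype (AR f).ker_subtype) ![u, v]
    (by simpa [Fin.sum_univ_two, syzygyCombination_apply] using huv)
  obtain ⟨rfl, rfl⟩ : u = 0 ∧ v = 0 := by simpa using And.intro (hli 0) (hli 1)
  rfl

variable {b} in
theorem range_syzygyCombination {d₁ d₂ : ℕ} (h₁ : IsHomogVec (b 0) d₁)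
    (h₂ : IsHomogVec (b 1) d₂) (m : ℕ) :
    LinearMap.range (syzygyCombination b d₁ d₂ m) = ARgr f m := by
  ext ρ
  constructor
  · rintro ⟨⟨u, v⟩, rfl⟩
    refine ⟨?_, fun i _ => ?_⟩
    · show relMap f (u.1 • (b 0 : Fin 3 → S3) + v.1 • (b 1 : Fin 3 → S3)) = 0
      simp [LinearMap.mem_ker.mp (b 0).2, LinearMap.mem_ker.mp (b 1).2]
    · exact add_mem (mul_mem_of_mem_twistedPiece u.2 (h₁ i))
        (mul_mem_of_mem_twistedPiece v.2 (h₂ i))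
  · rintro ⟨hρ, hhom⟩
    have hrepr := congrArg Subtype.val (b.sum_repr ⟨ρ, hρ⟩)
    simp only [Fin.sum_univ_two, Submodule.coe_add, Submodule.coe_smul] at hrepr
    obtain ⟨u, hu, hu'⟩ := exists_mem_twistedPiece_homogeneousComponent_mul d₁ m (b.repr ⟨ρ, hρ⟩ 0)
    obtain ⟨v, hv, hv'⟩ := exists_mem_twistedPiece_homogeneousComponent_mul d₂ m (b.repr ⟨ρ, hρ⟩ 1)
    refine ⟨(⟨u, hu⟩, ⟨v, hv⟩), funext fun i => ?_⟩
    rw [← homogeneousComponent_eq_self (hhom i (Set.mem_univ i)), ← hrepr]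
    simp [syzygyCombination_apply, hu' _ (h₁ i), hv' _ (h₂ i)]

end FreeBasis

theorem jacobianIdeal_inf_homogeneousSubmodule_eq_bot {f : S3} {d k : ℕ}
    (hf : f.IsHomogeneous d) (hk : k < d - 1) :
    (jacobianIdeal f).restrictScalars ℂ ⊓ S[k] = ⊥ := by
  rw [eq_bot_iff]
  rintro g ⟨hJ, hg⟩
  obtain ⟨ρ, rfl⟩ : g ∈ LinearMap.range (relMap f) := jacobianIdeal_eq_range_relMap f ▸ hJ
  rw [Submodule.mem_bot, ← homogeneousComponent_eq_self hg, homogeneousComponent_relMap hf,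
    if_neg (by omega)]

namespace IsFreeDivisorWith

variable {f : S3} {d₁ d₂ : ℕ}

theorem symm (hfree : IsFreeDivisorWith f d₁ d₂) : IsFreeDivisorWith f d₂ d₁ := by
  obtain ⟨b, h₁, h₂⟩ := hfree
  exact ⟨b.reindex (Equiv.swap 0 1), by simpa using h₂, by simpa using h₁⟩

theorem arDim_eq (hfree : IsFreeDivisorWith f d₁ d₂) (m : ℕ) :
    (arDim f m : ℤ) = chooseTwo ((m : ℤ) - d₁ + 2) + chooseTwo ((m : ℤ) - d₂ + 2) := by
  obtain ⟨b, h₁, h₂⟩ := hfree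
  rw [arDim, ← range_syzygyCombination h₁ h₂,
    LinearMap.finrank_range_of_inj (syzygyCombination_injective b _ _ m), Module.finrank_prod,
    Nat.cast_add, finrank_twistedPiece, finrank_twistedPiece]

theorem mdr_eq (hfree : IsFreeDivisorWith f d₁ d₂) : mdr f = min d₁ d₂ := by
  obtain ⟨b, h₁, h₂⟩ := hfree
  have hbasis {j : Fin 2} {e : ℕ} (hj : IsHomogVec (b j) e) : ARgr f e ≠ ⊥ := fun hbot =>
    b.ne_zero j <| Subtype.ext <| (Submodule.mem_bot ℂ).mp <|
      hbot ▸ ⟨LinearMap.mem_ker.mpr (b j).2, fun i _ => hj i⟩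
  have hlow {q : ℕ} (hq : q < min d₁ d₂) : ARgr f q = ⊥ := by
    rw [eq_bot_iff, ← range_syzygyCombination h₁ h₂]
    rintro _ ⟨⟨⟨u, hu⟩, ⟨v, hv⟩⟩, rfl⟩
    rw [twistedPiece, if_neg (by omega), Submodule.mem_bot] at hu hv
    simp [syzygyCombination_apply, hu, hv]
  have hmin : ARgr f (min d₁ d₂) ≠ ⊥ := by
    rcases min_choice d₁ d₂ with h | h <;> rw [h]
    exacts [hbasis h₁, hbasis h₂]
  exact le_antisymm (Nat.sInf_le hmin)
    (le_csInf ⟨_, hmin⟩ fun q hq => not_lt.mp fun hlt => hq (hlow hlt))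

theorem milnorDim_eq (hfree : IsFreeDivisorWith f d₁ d₂) {d : ℕ} (hf : f.IsHomogeneous d)
    (hd : 1 ≤ d) (k : ℕ) :
    (milnorDim f k : ℤ) = chooseTwo ((k : ℤ) + 2) - 3 * chooseTwo ((k : ℤ) - d + 3)
      + chooseTwo ((k : ℤ) - d + 3 - d₁) + chooseTwo ((k : ℤ) - d + 3 - d₂) := by
  have hmilnor := milnorDim_add_finrank_jacobianIdeal_inf f k
  zify at hmilnor
  rw [finrank_homogeneousSubmodule_fin_three] at hmilnor
  by_cases hk : k < d - 1
  · rw [jacobianIdeal_inf_homogeneousSubmodule_eq_bot hf hk, finrank_bot] at hmilnor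
    simp only [chooseTwo_eq_zero_of_le_one (show (k : ℤ) - d + 3 ≤ 1 by omega),
      chooseTwo_eq_zero_of_le_one (show (k : ℤ) - d + 3 - d₁ ≤ 1 by omega),
      chooseTwo_eq_zero_of_le_one (show (k : ℤ) - d + 3 - d₂ ≤ 1 by omega)]
    simpa using hmilnor
  · obtain ⟨m, rfl⟩ : ∃ m, k = m + (d - 1) := ⟨k - (d - 1), by omega⟩
    have hjac := finrank_jacobianIdeal_inf_add_arDim hf m
    zify at hjac
    rw [finrank_homogeneousSubmodule_fin_three, hfree.arDim_eq] at hjac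
    have hshift : ((m + (d - 1) : ℕ) : ℤ) - d + 3 = m + 2 := by omega
    rw [hshift, add_sub_right_comm _ 2 (d₁ : ℤ), add_sub_right_comm _ 2 (d₂ : ℤ)]
    linarith

section

variable {d : ℕ} (hfree : IsFreeDivisorWith f d₁ d₂) (hf : f.IsHomogeneous d)
include hfree hf

theorem milnorDim_succ_sub (hd : 1 ≤ d) (k : ℕ) :
    (milnorDim f (k + 1) : ℤ) - milnorDim f k = (k + 2) - 3 * max ((k : ℤ) - d + 3) 0
      + max ((k : ℤ) - d + 3 - d₁) 0 + max ((k : ℤ) - d + 3 - d₂) 0 := by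
  rw [hfree.milnorDim_eq hf hd, hfree.milnorDim_eq hf hd]
  push_cast
  rw [show (k : ℤ) + 1 + 2 = k + 2 + 1 by ring, show (k : ℤ) + 1 - d + 3 = k - d + 3 + 1 by ring,
    add_sub_right_comm _ 1 (d₁ : ℤ), add_sub_right_comm _ 1 (d₂ : ℤ), chooseTwo_add_one,
    chooseTwo_add_one, chooseTwo_add_one, chooseTwo_add_one,
    max_eq_left (by omega : (0 : ℤ) ≤ k + 2)]
  ring

theorem add_add_one_eq (hd : 1 ≤ d) {τ : ℕ} (hτ : ∃ N, ∀ k ≥ N, milnorDim f k = τ) :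
    d₁ + d₂ + 1 = d := by
  obtain ⟨N, hN⟩ := hτ
  have h := hfree.milnorDim_succ_sub hf hd (N + d + d₁ + d₂)
  rw [hN _ (by omega), hN _ (by omega), max_eq_left (by omega), max_eq_left (by omega),
    max_eq_left (by omega)] at h
  omega

theorem milnorDim_eq_of_add_le (hd : 1 ≤ d) (h12 : d₁ ≤ d₂) {τ : ℕ}
    (hτ : ∃ N, ∀ k ≥ N, milnorDim f k = τ) {k : ℕ} (hk : d + d₂ ≤ k + 3) :
    milnorDim f k = τ := by
  have hsum := hfree.add_add_one_eq hf hd hτ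
  have hstep (j : ℕ) : milnorDim f (k + j + 1) = milnorDim f (k + j) := by
    have h := hfree.milnorDim_succ_sub hf hd (k + j)
    rw [max_eq_left (by omega), max_eq_left (by omega), max_eq_left (by omega)] at h
    omega
  have hconst (j : ℕ) : milnorDim f (k + j) = milnorDim f k := by
    induction j with
    | zero => rfl
    | succ j ih => rw [← add_assoc, hstep, ih]
  obtain ⟨N, hN⟩ := hτ
  rw [← hconst N, hN _ (Nat.le_add_left N k)]

theorem milnorDim_ne_of_add_eq (hd : 3 ≤ d) (h12 : d₁ ≤ d₂) {τ : ℕ}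
    (hτ : ∃ N, ∀ k ≥ N, milnorDim f k = τ) {k : ℕ} (hk : k + 4 = d + d₂) :
    milnorDim f k ≠ τ := by
  have hsum := hfree.add_add_one_eq hf (by omega) hτ
  intro hτ'
  have h := hfree.milnorDim_succ_sub hf (by omega) k
  rw [hfree.milnorDim_eq_of_add_le hf (by omega) h12 hτ (by omega), hτ', max_eq_left (by omega),
    max_eq_right (a := (k : ℤ) - d + 3 - d₂) (by omega)] at h
  have := le_max_left ((k : ℤ) - d + 3 - d₁) 0
  omega

theorem stf_add_three (hd : 3 ≤ d) (h12 : d₁ ≤ d₂) {τ : ℕ}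
    (hτ : ∃ N, ∀ k ≥ N, milnorDim f k = τ) : stf f τ + 3 = d + d₂ := by
  have hsum := hfree.add_add_one_eq hf (by omega) hτ
  rw [stf, Nat.sInf_setOf_forall_ge_eq (P := fun k => milnorDim f k = τ) (n := d + d₂ - 4)
    (fun k hk => hfree.milnorDim_eq_of_add_le hf (by omega) h12 hτ (by omega))
    (hfree.milnorDim_ne_of_add_eq hf hd h12 hτ (by omega))]
  omega

theorem ctf_add_two (hd : 2 ≤ d) (h12 : d₁ ≤ d₂) (hsum : d₁ + d₂ + 1 = d) :
    ctf f d + 2 = d + d₁ := by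
  have hagree (k : ℕ) (hk : k ≤ d + d₁ - 2) : (milnorDim f k : ℤ) = smoothMilnorDim d k := by
    rw [hfree.milnorDim_eq hf (by omega), smoothMilnorDim,
      chooseTwo_eq_zero_of_le_one (a := (k : ℤ) - d + 3 - d₁) (by omega),
      chooseTwo_eq_zero_of_le_one (a := (k : ℤ) - d + 3 - d₂) (by omega),
      chooseTwo_eq_zero_of_le_one (a := (k : ℤ) - 2 * d + 4) (by omega),
      chooseTwo_eq_zero_of_le_one (a := (k : ℤ) - 3 * d + 5) (by omega)]
    ring
  have hdisagree : (milnorDim f (d + d₁ - 2 + 1) : ℤ) ≠ smoothMilnorDim d (d + d₁ - 2 + 1 : ℕ) := by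
    rw [hfree.milnorDim_eq hf (by omega), smoothMilnorDim,
      show ((d + d₁ - 2 + 1 : ℕ) : ℤ) - d + 3 - d₁ = 2 by omega,
      chooseTwo_eq_zero_of_le_one (a := ((d + d₁ - 2 + 1 : ℕ) : ℤ) - 2 * d + 4) (by omega),
      chooseTwo_eq_zero_of_le_one (a := ((d + d₁ - 2 + 1 : ℕ) : ℤ) - 3 * d + 5) (by omega)]
    have := chooseTwo_nonneg (((d + d₁ - 2 + 1 : ℕ) : ℤ) - d + 3 - d₂)
    have h2 : chooseTwo 2 = 1 := rfl
    omega
  rw [ctf, Nat.sSup_setOf_forall_le_eq hagree hdisagree]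
  omega

end

end IsFreeDivisorWith

theorem stmt2_general (f : S3) (d : ℕ) (hd : 4 ≤ d) (hf : f.IsHomogeneous d)
    (hfree : IsFreeDivisor f)
    (τ : ℕ) (hτ : ∃ N : ℕ, ∀ k ≥ N, milnorDim f k = τ) :
    (stf f τ : ℤ) = 2 * d - 4 - mdr f ∧ (stf f τ : ℤ) = 3 * ((d : ℤ) - 2) - ctf f d := by
  obtain ⟨d₁, d₂, hfree⟩ := hfree
  wlog h12 : d₁ ≤ d₂ generalizing d₁ d₂
  · exact this d₂ d₁ hfree.symm (by omega)
  have hsum := hfree.add_add_one_eq hf (by omega) hτ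
  have hstf := hfree.stf_add_three hf (by omega) h12 hτ
  have hctf := hfree.ctf_add_two hf (by omega) h12 hsum
  rw [hfree.mdr_eq, min_eq_left h12]
  omega

theorem stmt2 (f : S3) (d : ℕ) (hd : 4 ≤ d) (hf : f.IsHomogeneous d) (hred : Squarefree f)
    (hfree : IsFreeDivisor f)
    (τ : ℕ) (hτ : ∃ N : ℕ, ∀ k ≥ N, milnorDim f k = τ) :
    (stf f τ : ℤ) = 2 * d - 4 - mdr f ∧ (stf f τ : ℤ) = 3 * ((d : ℤ) - 2) - ctf f d :=
  stmt2_general f d hd hf hfree τ hτ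

end
end

section
/- For every integer k ≥ 2, the homogeneous polynomial f = (y^{k−1}z + x^k)²·y − x^{2k+1} ∈ ℂ[x,y,z] of degree 2k+1 defines a free divisor C_{2k+1}: f = 0 with exponents d_1 = d_2 = k; that is, AR(f) is a free S-module admitting a homogeneous basis consisting of two relations of degree k. -/
open MvPolynomial

noncomputable section

/-!
Saito's criterion in three variables: if `u ⨯₃ v = e • ∇f` with `e` a unit and the partials of
`f` have no common prime factor, then `u, v` is a basis of `AR(f)`. Indeed, for a syzygy `r`,
both `r ⨯₃ v` and `u ⨯₃ r` are cross products of vectors orthogonal to `∇f`, hence parallel to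
`∇f`; primitivity of `∇f` makes them polynomial multiples `α • ∇f` and `β • ∇f`, and then
`e • r - α • u - β • v` has zero cross product with both `u` and `v`, so it vanishes.

For `f = G² y - x^(2k+1)` with `G = y^(k-1) z + x^k`, explicit syzygies of degree `k` satisfy
`u ⨯₃ v = -2 • ∇f`. A prime dividing `f_z = 2 y^(k+1) G` divides `y G`; then `f_x` forces it to
divide `x`, which is impossible since `x ∤ y G`.
-/

open scoped Matrix

section CrossProduct

variable {R : Type*} [CommRing R]

theorem cross_eq_zero_iff {w F : Fin 3 → R} :
    w ⨯₃ F = 0 ↔ ∀ j k, w j * F k = w k * F j := by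
  simp only [cross_apply, funext_iff, Fin.forall_fin_succ, IsEmpty.forall_iff, and_true,
    Matrix.cons_val_zero, Matrix.cons_val_one, Matrix.cons_val_two, Matrix.tail_cons,
    Matrix.head_cons, Fin.succ_zero_eq_one, Fin.succ_one_eq_two, sub_eq_zero, Pi.zero_apply]
  grind

theorem dotProduct_eq_zero_of_cross_eq_smul {u v F : Fin 3 → R} {e : R} (he : IsUnit e)
    (huv : u ⨯₃ v = e • F) : u ⬝ᵥ F = 0 ∧ v ⬝ᵥ F = 0 := by
  constructor <;> refine he.mul_right_eq_zero.mp ?_ <;> rw [← smul_eq_mul, ← dotProduct_smul, ← huv]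
  exacts [dot_self_cross u v, dot_cross_self u v]

end CrossProduct

section Domain

variable {R : Type*} [CommRing R] [IsDomain R]

theorem eq_zero_of_cross_eq_zero {s u v : Fin 3 → R} (hsu : s ⨯₃ u = 0) (hsv : s ⨯₃ v = 0)
    (huv : u ⨯₃ v ≠ 0) : s = 0 := by
  rw [cross_eq_zero_iff] at hsu hsv
  have key (i a b : Fin 3) : s i * (u a * v b - u b * v a) = 0 := by
    linear_combination v b * hsu i a + u i * hsv a b - v a * hsu i b
  funext i
  suffices s i • u ⨯₃ v = 0 from (smul_eq_zero.mp this).resolve_right huv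
  funext k
  fin_cases k <;> exact key i _ _

theorem linearIndependent_of_cross_ne_zero {u v : Fin 3 → R} (huv : u ⨯₃ v ≠ 0) :
    LinearIndependent R ![u, v] := by
  rw [LinearIndependent.pair_iff]
  intro a b hab
  have ha : a • u ⨯₃ v = 0 := by simpa [cross_self] using congrArg (· ⨯₃ v) hab
  have hb : b • v ⨯₃ u = 0 := by simpa [cross_self] using congrArg (· ⨯₃ u) hab
  rw [← cross_anticomm, smul_neg, neg_eq_zero] at hb
  exact ⟨(smul_eq_zero.mp ha).resolve_right huv, (smul_eq_zero.mp hb).resolve_right huv⟩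

end Domain

section UFD

variable {R : Type*} [CommRing R] [IsDomain R] [UniqueFactorizationMonoid R]

theorem dvd_of_forall_dvd_mul {ι : Type*} {c : ι → R} (hc0 : c ≠ 0)
    (hc : ∀ p : R, Prime p → ¬ ∀ j, p ∣ c j) {a b : R} (h : ∀ j, a ∣ b * c j) : a ∣ b := by
  induction a using UniqueFactorizationMonoid.induction_on_prime generalizing b with
  | h₁ =>
    obtain ⟨j, hj⟩ := Function.ne_iff.mp hc0
    exact zero_dvd_iff.mpr ((mul_eq_zero.mp (zero_dvd_iff.mp (h j))).resolve_right hj)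
  | h₂ u hu => exact hu.dvd
  | h₃ a p _ hp ih =>
    have hpb : p ∣ b := by
      by_contra hpb
      exact hc p hp fun j => (hp.dvd_or_dvd (dvd_of_mul_right_dvd (h j))).resolve_left hpb
    obtain ⟨b, rfl⟩ := hpb
    refine mul_dvd_mul_left p (ih fun j => ?_)
    rw [← mul_dvd_mul_iff_left hp.ne_zero, ← mul_assoc]
    exact h j

theorem exists_eq_smul_of_cross_eq_zero {F w : Fin 3 → R} (hF0 : F ≠ 0)
    (hF : ∀ p : R, Prime p → ¬ ∀ i, p ∣ F i) (h : w ⨯₃ F = 0) : ∃ α : R, w = α • F := by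
  obtain ⟨i, hi⟩ := Function.ne_iff.mp hF0
  have hwF := cross_eq_zero_iff.mp h
  obtain ⟨α, hα⟩ : F i ∣ w i := dvd_of_forall_dvd_mul hF0 hF fun j => ⟨w j, by rw [hwF]; ring⟩
  refine ⟨α, funext fun j => mul_right_cancel₀ hi ?_⟩
  rw [hwF, hα, Pi.smul_apply, smul_eq_mul]
  ring

theorem exists_eq_smul_add_smul_of_cross_eq_smul {F u v r : Fin 3 → R} (hF0 : F ≠ 0)
    (hF : ∀ p : R, Prime p → ¬ ∀ i, p ∣ F i) {e : R} (he : IsUnit e) (huv : u ⨯₃ v = e • F)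
    (hr : r ⬝ᵥ F = 0) : ∃ α β : R, r = α • u + β • v := by
  obtain ⟨hu, hv⟩ := dotProduct_eq_zero_of_cross_eq_smul he huv
  have parallel {a b : Fin 3 → R} (ha : a ⬝ᵥ F = 0) (hb : b ⬝ᵥ F = 0) : ∃ α : R, a ⨯₃ b = α • F :=
    exists_eq_smul_of_cross_eq_zero hF0 hF <| by
      rw [cross_cross_eq_smul_sub_smul, ha, hb, zero_smul, zero_smul, sub_zero]
  obtain ⟨α, hα⟩ := parallel hr hv
  obtain ⟨β, hβ⟩ := parallel hu hr
  have hsu : (e • r - α • u - β • v) ⨯₃ u = 0 := by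
    simp only [map_sub, map_smul, LinearMap.sub_apply, LinearMap.smul_apply, cross_self,
      ← cross_anticomm, hβ, huv]
    module
  have hsv : (e • r - α • u - β • v) ⨯₃ v = 0 := by
    simp only [map_sub, map_smul, LinearMap.sub_apply, LinearMap.smul_apply, cross_self, hα, huv]
    module
  have hs := eq_zero_of_cross_eq_zero hsu hsv (huv ▸ smul_ne_zero he.ne_zero hF0)
  refine ⟨↑he.unit⁻¹ * α, ↑he.unit⁻¹ * β, ?_⟩
  rw [sub_sub, sub_eq_zero] at hs
  rw [mul_smul, mul_smul, ← smul_add, ← hs, smul_smul, he.val_inv_mul, one_smul]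

theorem exists_basis_of_cross_eq_smul {F u v : Fin 3 → R} (hF0 : F ≠ 0)
    (hF : ∀ p : R, Prime p → ¬ ∀ i, p ∣ F i) {e : R} (he : IsUnit e) (huv : u ⨯₃ v = e • F)
    (N : Submodule R (Fin 3 → R)) (hN : ∀ r, r ∈ N ↔ r ⬝ᵥ F = 0) :
    ∃ b : Module.Basis (Fin 2) R N, (b 0 : Fin 3 → R) = u ∧ (b 1 : Fin 3 → R) = v := by
  obtain ⟨hu, hv⟩ := dotProduct_eq_zero_of_cross_eq_smul he huv
  let U : N := ⟨u, (hN u).2 hu⟩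
  let V : N := ⟨v, (hN v).2 hv⟩
  have hli : LinearIndependent R ![U, V] := by
    refine LinearIndependent.of_comp N.subtype ?_
    convert linearIndependent_of_cross_ne_zero (huv ▸ smul_ne_zero he.ne_zero hF0) using 1
    ext i : 1
    fin_cases i <;> rfl
  have hsp : ⊤ ≤ Submodule.span R (Set.range ![U, V]) := by
    rintro ⟨r, hr⟩ -
    obtain ⟨α, β, rfl⟩ := exists_eq_smul_add_smul_of_cross_eq_smul hF0 hF he huv ((hN r).1 hr)
    exact add_mem (Submodule.smul_mem _ α (Submodule.subset_span (Set.mem_range_self 0)))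
      (Submodule.smul_mem _ β (Submodule.subset_span (Set.mem_range_self 1)))
  exact ⟨Module.Basis.mk hli hsp, by simp [U], by simp [V]⟩

end UFD

def grad (f : S3) : Fin 3 → S3 := fun i => pderiv i f

theorem grad_eq_vec3 (f : S3) : grad f = ![pderiv 0 f, pderiv 1 f, pderiv 2 f] := by
  funext i
  fin_cases i <;> rfl

theorem mem_AR_iff {f : S3} {ρ : Fin 3 → S3} : ρ ∈ AR f ↔ ρ ⬝ᵥ grad f = 0 := Iff.rfl

theorem isFreeDivisorWith_of_cross_eq_smul_grad {f : S3} {u v : Fin 3 → S3} {d₁ d₂ : ℕ}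
    (hf0 : grad f ≠ 0) (hf : ∀ p : S3, Prime p → ¬ ∀ i, p ∣ grad f i) {e : S3} (he : IsUnit e)
    (huv : u ⨯₃ v = e • grad f) (hu : IsHomogVec u d₁) (hv : IsHomogVec v d₂) :
    IsFreeDivisorWith f d₁ d₂ := by
  obtain ⟨b, hb0, hb1⟩ := exists_basis_of_cross_eq_smul hf0 hf he huv (AR f) fun _ => mem_AR_iff
  exact ⟨b, hb0 ▸ hu, hb1 ▸ hv⟩

/- `curveFactor j` and `curvePoly j` are `G` and `f` for `k = j + 2`, which keeps every exponent
free of truncated subtraction. -/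
def curveFactor (j : ℕ) : S3 := X 1 ^ (j + 1) * X 2 + X 0 ^ (j + 2)

def curvePoly (j : ℕ) : S3 := curveFactor j ^ 2 * X 1 - X 0 ^ (2 * j + 5)

theorem isHomogeneous_curveFactor (j : ℕ) : (curveFactor j).IsHomogeneous (j + 2) :=
  ((isHomogeneous_X_pow 1 (j + 1)).mul (isHomogeneous_X ℂ 2)).add (isHomogeneous_X_pow 0 (j + 2))

theorem isHomogeneous_curvePoly (j : ℕ) : (curvePoly j).IsHomogeneous (2 * j + 5) := by
  have h := ((isHomogeneous_curveFactor j).pow 2).mul (isHomogeneous_X ℂ 1)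
  rw [show (j + 2) * 2 + 1 = 2 * j + 5 by ring] at h
  exact h.sub (isHomogeneous_X_pow 0 _)

theorem grad_curvePoly (j : ℕ) :
    grad (curvePoly j) =
      ![C (2 * (j + 2) : ℂ) * (X 0 ^ (j + 1) * X 1) * curveFactor j
          - C (2 * j + 5 : ℂ) * X 0 ^ (2 * j + 4),
        C (2 * (j + 1) : ℂ) * (X 1 ^ (j + 1) * X 2) * curveFactor j + curveFactor j ^ 2,
        C 2 * X 1 ^ (j + 2) * curveFactor j] := by
  rw [grad_eq_vec3]
  refine Matrix.vec3_eq ?_ ?_ ?_ <;>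
    simp only [curvePoly, curveFactor, map_sub, map_add, Derivation.leibniz,
      Derivation.leibniz_pow, pderiv_X, Pi.single_apply, Fin.reduceEq, ↓reduceIte, smul_eq_mul,
      nsmul_eq_mul, Nat.reduceSubDiff, Nat.cast_add, Nat.cast_mul, Nat.cast_ofNat, map_mul,
      map_natCast, map_ofNat, map_one] <;>
    ring

theorem grad_curvePoly_ne_zero (j : ℕ) : grad (curvePoly j) ≠ 0 := by
  intro h
  have h2 := congrArg (eval ![0, 1, 1]) (congrFun h 2)
  simp [grad_curvePoly, curveFactor] at h2

theorem not_forall_prime_dvd_grad_curvePoly (j : ℕ) (p : S3) (hp : Prime p) :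
    ¬ ∀ i, p ∣ grad (curvePoly j) i := by
  intro h
  have h0 := h 0
  have h2 := h 2
  simp only [grad_curvePoly, Matrix.cons_val_zero, Matrix.cons_val_two, Matrix.tail_cons,
    Matrix.head_cons] at h0 h2
  set G := curveFactor j
  have hyG : p ∣ X 1 * G := by
    have : p ∣ C 2 * (X 1 * G) ^ (j + 2) := h2.trans ⟨G ^ (j + 1), by ring⟩
    exact hp.dvd_of_dvd_pow (((Ne.isUnit two_ne_zero).map C).dvd_mul_left.mp this)
  have hx : p ∣ X 0 := by
    have : p ∣ C (2 * j + 5 : ℂ) * X 0 ^ (2 * j + 4) :=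
      (dvd_sub (dvd_mul_of_dvd_right hyG (C (2 * (j + 2) : ℂ) * X 0 ^ (j + 1))) h0).trans
        ⟨1, by ring⟩
    exact hp.dvd_of_dvd_pow (((Ne.isUnit (by norm_cast)).map C).dvd_mul_left.mp this)
  have hxyG : X 0 ∣ X 1 * G :=
    ((hp.irreducible.associated_of_dvd X_prime.irreducible hx).dvd_iff_dvd_left).mp hyG
  simpa [G, curveFactor] using (eval ![0, 1, 1]).map_dvd hxyG

def syzygyU (j : ℕ) : Fin 3 → S3 :=
  ![C 2 * (X 1 ^ (j + 1) * X 2) + C 2 * X 0 ^ (j + 2),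
    C (-2 * (2 * j + 5) * (2 * j + 3) : ℂ) * (X 1 ^ (j + 1) * X 2)
      + C (-4 * (j + 2) : ℂ) * (X 0 ^ (j + 1) * X 1) + C (2 * (2 * j + 5) : ℂ) * X 0 ^ (j + 2),
    C ((2 * j + 5) * (2 * j + 3) ^ 2 : ℂ) * (X 1 ^ j * X 2 ^ 2)
      + C (4 * (j + 2) * (j + 1) : ℂ) * (X 0 ^ (j + 1) * X 2)]

def syzygyV (j : ℕ) : Fin 3 → S3 :=
  ![0, C (-2) * X 1 ^ (j + 2), C (2 * j + 3 : ℂ) * (X 1 ^ (j + 1) * X 2) + X 0 ^ (j + 2)]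

theorem syzygyU_cross_syzygyV (j : ℕ) :
    syzygyU j ⨯₃ syzygyV j = (C (-2 : ℂ) : S3) • grad (curvePoly j) := by
  rw [grad_curvePoly, cross_apply, Matrix.smul_vec3]
  refine Matrix.vec3_eq ?_ ?_ ?_ <;>
    simp only [syzygyU, syzygyV, curveFactor, Matrix.cons_val, smul_eq_mul, map_add, map_mul,
      map_neg, map_pow, map_natCast, map_ofNat, map_one] <;>
    ring

theorem isHomogVec_syzygyU (j : ℕ) : IsHomogVec (syzygyU j) (j + 2) := by
  intro i
  have hyz : (X 1 ^ (j + 1) * X 2 : S3).IsHomogeneous (j + 2) :=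
    (isHomogeneous_X_pow 1 (j + 1)).mul (isHomogeneous_X ℂ 2)
  have hxy : (X 0 ^ (j + 1) * X 1 : S3).IsHomogeneous (j + 2) :=
    (isHomogeneous_X_pow 0 (j + 1)).mul (isHomogeneous_X ℂ 1)
  have hxz : (X 0 ^ (j + 1) * X 2 : S3).IsHomogeneous (j + 2) :=
    (isHomogeneous_X_pow 0 (j + 1)).mul (isHomogeneous_X ℂ 2)
  have hyzz : (X 1 ^ j * X 2 ^ 2 : S3).IsHomogeneous (j + 2) :=
    (isHomogeneous_X_pow 1 j).mul (isHomogeneous_X_pow 2 2)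
  have hx : (X 0 ^ (j + 2) : S3).IsHomogeneous (j + 2) := isHomogeneous_X_pow 0 (j + 2)
  fin_cases i
  · exact (hyz.C_mul _).add (hx.C_mul _)
  · exact ((hyz.C_mul _).add (hxy.C_mul _)).add (hx.C_mul _)
  · exact (hyzz.C_mul _).add (hxz.C_mul _)

theorem isHomogVec_syzygyV (j : ℕ) : IsHomogVec (syzygyV j) (j + 2) := by
  intro i
  fin_cases i
  · exact isHomogeneous_zero _ _ _
  · exact (isHomogeneous_X_pow 1 (j + 2)).C_mul _
  · exact (((isHomogeneous_X_pow 1 (j + 1)).mul (isHomogeneous_X ℂ 2)).C_mul _).add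
      (isHomogeneous_X_pow 0 (j + 2))

theorem stmt14 (k : ℕ) (hk : 2 ≤ k) :
    ((X 1 ^ (k - 1) * X 2 + X 0 ^ k) ^ 2 * X 1 - X 0 ^ (2 * k + 1) : S3).IsHomogeneous
        (2 * k + 1) ∧
    IsFreeDivisorWith ((X 1 ^ (k - 1) * X 2 + X 0 ^ k) ^ 2 * X 1 - X 0 ^ (2 * k + 1) : S3)
        k k := by
  obtain ⟨j, rfl⟩ := Nat.exists_eq_add_of_le' hk
  change (curvePoly j).IsHomogeneous (2 * j + 5) ∧ IsFreeDivisorWith (curvePoly j) (j + 2) (j + 2)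
  refine ⟨isHomogeneous_curvePoly j, ?_⟩
  exact isFreeDivisorWith_of_cross_eq_smul_grad (grad_curvePoly_ne_zero j)
    (not_forall_prime_dvd_grad_curvePoly j) ((Ne.isUnit (by norm_num)).map C)
    (syzygyU_cross_syzygyV j) (isHomogVec_syzygyU j) (isHomogVec_syzygyV j)
end
end

section
/- For every integer k ≥ 2, the homogeneous polynomial (y^{k−1}z + x^k)²·y − x^{2k+1} of degree 2k+1 is irreducible in ℂ[x,y,z]. -/
open MvPolynomial

noncomputable section

/-!
Regard the polynomial as a quadratic `A z² + B z + c` over `ℂ[x,y]`, with `m = k - 1`: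
`A = y^(2m+1)`, `B = 2 x^k y^(m+1)` and `c = x^(2k) y - x^(2k+1)`. A factor of degree zero in `z`
divides `A` and `c`, which are coprime because `y ∤ c`; a splitting into two linear factors
would make the discriminant `4 x^(2k+1) y^(2m+1)` a square, but setting `y = 1` leaves a
polynomial of odd degree in `x`.
-/

namespace Polynomial

variable {R : Type*} [CommRing R] {a b c : R}

theorem discrim_eq_sq_of_quadratic_eq_mul {a₁ b₁ a₂ b₂ : R}
    (h : C a * X ^ 2 + C b * X + C c = (C a₁ * X + C b₁) * (C a₂ * X + C b₂)) :
    discrim a b c = (a₁ * b₂ - a₂ * b₁) ^ 2 := by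
  have hexp : (C a₁ * X + C b₁) * (C a₂ * X + C b₂) =
      C (a₁ * a₂) * X ^ 2 + C (a₁ * b₂ + b₁ * a₂) * X + C (b₁ * b₂) := by
    simp only [map_mul, map_add]
    ring
  rw [hexp] at h
  have h2 : a = a₁ * a₂ := by simpa [-map_mul] using congrArg (coeff · 2) h
  have h1 : b = a₁ * b₂ + b₁ * a₂ := by simpa [-map_mul] using congrArg (coeff · 1) h
  have h0 : c = b₁ * b₂ := by simpa using congrArg (coeff · 0) h
  rw [discrim, h2, h1, h0]
  ring

theorem isUnit_of_dvd_quadratic_of_natDegree_eq_zero (hac : IsRelPrime a c) {p : R[X]}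
    (hp : p ∣ C a * X ^ 2 + C b * X + C c) (hp0 : p.natDegree = 0) : IsUnit p := by
  obtain ⟨r, rfl⟩ := natDegree_eq_zero.mp hp0
  have hcoeff := (C_dvd_iff_dvd_coeff r _).mp hp
  have hra : r ∣ a := by simpa using hcoeff 2
  have hrc : r ∣ c := by simpa using hcoeff 0
  exact isUnit_C.mpr (hac hra hrc)

theorem irreducible_quadratic_of_isRelPrime_of_discrim_ne_sq [IsDomain R] (ha : a ≠ 0)
    (hac : IsRelPrime a c) (hd : ∀ s, discrim a b c ≠ s ^ 2) :
    Irreducible (C a * X ^ 2 + C b * X + C c) := by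
  set q := C a * X ^ 2 + C b * X + C c
  have hq : q.natDegree = 2 := natDegree_quadratic ha
  refine ⟨fun hu => by simp [natDegree_eq_zero_of_isUnit hu] at hq, fun g h hgh => ?_⟩
  have hgh0 : g * h ≠ 0 := hgh ▸ ne_zero_of_natDegree_gt (n := 0) (by omega)
  have hg0 : g ≠ 0 := left_ne_zero_of_mul hgh0
  have hh0 : h ≠ 0 := right_ne_zero_of_mul hgh0
  have hdeg : g.natDegree + h.natDegree = 2 := by rw [← natDegree_mul hg0 hh0, ← hgh, hq]
  by_cases hg : g.natDegree = 0
  · exact .inl (isUnit_of_dvd_quadratic_of_natDegree_eq_zero hac ⟨h, hgh⟩ hg)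
  by_cases hh : h.natDegree = 0
  · exact .inr (isUnit_of_dvd_quadratic_of_natDegree_eq_zero hac ⟨g, hgh.trans (mul_comm g h)⟩ hh)
  have hlin : q = (C (g.coeff 1) * X + C (g.coeff 0)) * (C (h.coeff 1) * X + C (h.coeff 0)) := by
    rw [← eq_X_add_C_of_natDegree_le_one (by omega), ← eq_X_add_C_of_natDegree_le_one (by omega),
      hgh]
  exact absurd (discrim_eq_sq_of_quadratic_eq_mul hlin) (hd _)

end Polynomial

namespace MvPolynomial

section equivPolynomialLastVar

variable (R : Type*) [CommSemiring R]

def equivPolynomialLastVar : MvPolynomial (Fin 3) R ≃ₐ[R] Polynomial (MvPolynomial (Fin 2) R) :=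
  (renameEquiv R (finRotate 3)).trans (finSuccEquiv R 2)

@[simp]
theorem equivPolynomialLastVar_X_zero : equivPolynomialLastVar R (X 0) = Polynomial.C (X 0) := by
  rw [equivPolynomialLastVar, AlgEquiv.trans_apply, renameEquiv_apply, rename_X,
    show finRotate 3 0 = Fin.succ 0 by decide, finSuccEquiv_X_succ]

@[simp]
theorem equivPolynomialLastVar_X_one : equivPolynomialLastVar R (X 1) = Polynomial.C (X 1) := by
  rw [equivPolynomialLastVar, AlgEquiv.trans_apply, renameEquiv_apply, rename_X,
    show finRotate 3 1 = Fin.succ 1 by decide, finSuccEquiv_X_succ]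

@[simp]
theorem equivPolynomialLastVar_X_two : equivPolynomialLastVar R (X 2) = Polynomial.X := by
  rw [equivPolynomialLastVar, AlgEquiv.trans_apply, renameEquiv_apply, rename_X,
    show finRotate 3 2 = 0 by decide, finSuccEquiv_X_zero]

end equivPolynomialLastVar

variable {R : Type*} [CommRing R] [IsDomain R]

theorem isRelPrime_X_one_pow_X_zero_pow_mul_X_one_sub [UniqueFactorizationMonoid R] (l k : ℕ) :
    IsRelPrime ((X 1 : MvPolynomial (Fin 2) R) ^ l) (X 0 ^ k * X 1 - X 0 ^ (k + 1)) := by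
  refine IsRelPrime.pow_left <| X_prime.irreducible.isRelPrime_iff_not_dvd.mpr fun hdvd => ?_
  have := map_dvd (aeval ![(1 : R), 0]) hdvd
  simp at this

theorem sq_ne_C_mul_X_zero_pow_odd_mul_X_one_pow {r : R} (hr : r ≠ 0)
    (s : MvPolynomial (Fin 2) R) (k l : ℕ) :
    s ^ 2 ≠ C r * X 0 ^ (2 * k + 1) * X 1 ^ l := by
  intro h
  have hdeg := congrArg (fun p => (aeval (![Polynomial.X, 1] : Fin 2 → Polynomial R) p).natDegree) h
  simp only [map_pow, map_mul, aeval_C, aeval_X, Polynomial.natDegree_pow, Matrix.cons_val_zero,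
    Matrix.cons_val_one, Matrix.cons_val_fin_one, Polynomial.algebraMap_eq, one_pow, mul_one,
    Polynomial.natDegree_C_mul_X_pow _ _ hr] at hdeg
  omega

end MvPolynomial

theorem stmt17_general (k : ℕ) :
    Irreducible ((X 1 ^ (k - 1) * X 2 + X 0 ^ k) ^ 2 * X 1 - X 0 ^ (2 * k + 1) : S3) := by
  set m := k - 1
  rw [← MulEquiv.irreducible_iff (equivPolynomialLastVar ℂ)]
  have hquad : equivPolynomialLastVar ℂ ((X 1 ^ m * X 2 + X 0 ^ k) ^ 2 * X 1 - X 0 ^ (2 * k + 1)) =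
      Polynomial.C (X 1 ^ (2 * m + 1)) * Polynomial.X ^ 2 +
        Polynomial.C (2 * X 0 ^ k * X 1 ^ (m + 1)) * Polynomial.X +
        Polynomial.C (X 0 ^ (2 * k) * X 1 - X 0 ^ (2 * k + 1)) := by
    simp only [map_sub, map_mul, map_pow, map_add, map_ofNat, equivPolynomialLastVar_X_zero,
      equivPolynomialLastVar_X_one, equivPolynomialLastVar_X_two]
    ring
  have hdiscrim : discrim (X 1 ^ (2 * m + 1) : MvPolynomial (Fin 2) ℂ) (2 * X 0 ^ k * X 1 ^ (m + 1))
      (X 0 ^ (2 * k) * X 1 - X 0 ^ (2 * k + 1)) = C 4 * X 0 ^ (2 * k + 1) * X 1 ^ (2 * m + 1) := by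
    rw [discrim, map_ofNat]
    ring
  refine hquad ▸ Polynomial.irreducible_quadratic_of_isRelPrime_of_discrim_ne_sq
    (pow_ne_zero _ (X_ne_zero _)) (isRelPrime_X_one_pow_X_zero_pow_mul_X_one_sub _ _) ?_
  rw [hdiscrim]
  exact fun s h => sq_ne_C_mul_X_zero_pow_odd_mul_X_one_pow (by norm_num) s k _ h.symm

theorem stmt17 (k : ℕ) (hk : 2 ≤ k) :
    Irreducible ((X 1 ^ (k - 1) * X 2 + X 0 ^ k) ^ 2 * X 1 - X 0 ^ (2 * k + 1) : S3) :=
  stmt17_general k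
end
end
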